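/- Let W be a real random variable with law N(0, T), and define X := log s0 + (r − σ0²/2)T + σ0 W. Then E[ W² · 1_{X > log K} e^{X} ] = s0 e^{rT} T ( (1 + σ0² T) Φ(d₊) + (2 σ0 √T − d₊) φ(d₊) ). -/

import Mathlib

/-!
Writing `W = √T U` with `U` standard normal, the factor `e^X` is absorbed by completing the
square: `φ(v + c) e^{cv + c²/2} = φ(v)` with `c = σ0√T`, so after the shift `U = V + c` the
expectation becomes `s0 e^{rT} T ∫_{-d₊}^∞ (v + c)² φ(v) dv`. The truncated moments
`∫_a^∞ x φ = φ(a)` and `∫_a^∞ x² φ = a φ(a) + ∫_a^∞ φ` follow from `φ' = -x φ`, and by symmetry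
`∫_{-d}^∞ φ = Φ(d)`.
-/

open Set Real MeasureTheory ProbabilityTheory

/-- The standard normal density. -/
noncomputable def stdNormalPDF (x : ℝ) : ℝ :=
  (Real.sqrt (2 * Real.pi))⁻¹ * Real.exp (-x ^ 2 / 2)

/-- The standard normal cumulative distribution function. -/
noncomputable def stdNormalCDF (x : ℝ) : ℝ :=
  ∫ y in Set.Iio x, stdNormalPDF y

open Filter Topology
open scoped NNReal

theorem integral_Ioi_of_hasDerivAt_of_integrableOn {E : Type*} [NormedAddCommGroup E]
    [NormedSpace ℝ E] [CompleteSpace E] {f f' : ℝ → E} {a : ℝ}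
    (hderiv : ∀ x ∈ Ici a, HasDerivAt f (f' x) x) (hf' : IntegrableOn f' (Ioi a))
    (hf : IntegrableOn f (Ioi a)) :
    ∫ x in Ioi a, f' x = -f a := by
  have hlim : Tendsto f atTop (𝓝 0) :=
    tendsto_zero_of_hasDerivAt_of_integrableOn_Ioi (fun x hx ↦ hderiv x (Ioi_subset_Ici_self hx))
      hf' hf
  simpa using integral_Ioi_of_hasDerivAt_of_tendsto' hderiv hf' hlim

theorem stdNormalPDF_eq_gaussianPDFReal : stdNormalPDF = gaussianPDFReal 0 1 := by
  ext x
  simp [stdNormalPDF, gaussianPDFReal]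

theorem stdNormalPDF_neg (x : ℝ) : stdNormalPDF (-x) = stdNormalPDF x := by
  simp [stdNormalPDF]

theorem stdNormalPDF_add_mul_exp (x c : ℝ) :
    stdNormalPDF (x + c) * exp (c * x + c ^ 2 / 2) = stdNormalPDF x := by
  rw [stdNormalPDF, stdNormalPDF, mul_assoc, ← exp_add]
  ring_nf

theorem hasDerivAt_stdNormalPDF (x : ℝ) :
    HasDerivAt stdNormalPDF (-x * stdNormalPDF x) x := by
  have h : HasDerivAt (fun y : ℝ ↦ -y ^ 2 / 2) (-x) x :=
    ((hasDerivAt_pow 2 x).neg.div_const 2).congr_deriv (by ring)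
  exact (h.exp.const_mul _).congr_deriv (by rw [stdNormalPDF]; ring)

theorem integrable_stdNormalPDF : Integrable stdNormalPDF :=
  stdNormalPDF_eq_gaussianPDFReal ▸ integrable_gaussianPDFReal 0 1

theorem integrable_pow_mul_stdNormalPDF (n : ℕ) :
    Integrable fun x ↦ x ^ n * stdNormalPDF x := by
  have h := (integrable_rpow_mul_exp_neg_mul_sq (b := 1 / 2) (by norm_num)
    (s := n) (by linarith [n.cast_nonneg (α := ℝ)])).const_mul (√(2 * π))⁻¹
  convert h using 2 with x
  rw [rpow_natCast, stdNormalPDF]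
  ring_nf

theorem integral_Ioi_neg_stdNormalPDF (d : ℝ) :
    ∫ x in Ioi (-d), stdNormalPDF x = stdNormalCDF d := by
  have h := integral_comp_neg_Ioi (-d) stdNormalPDF
  simp only [stdNormalPDF_neg, neg_neg] at h
  rw [h, integral_Iic_eq_integral_Iio, stdNormalCDF]

theorem integral_Ioi_mul_stdNormalPDF (a : ℝ) :
    ∫ x in Ioi a, x * stdNormalPDF x = stdNormalPDF a := by
  have h := integral_Ioi_of_hasDerivAt_of_integrableOn (a := a) (f := fun x ↦ -stdNormalPDF x)
    (fun x _ ↦ (hasDerivAt_stdNormalPDF x).neg)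
    (by simpa using (integrable_pow_mul_stdNormalPDF 1).integrableOn)
    integrable_stdNormalPDF.neg.integrableOn
  simpa using h

theorem integral_Ioi_sq_mul_stdNormalPDF (a : ℝ) :
    ∫ x in Ioi a, x ^ 2 * stdNormalPDF x = a * stdNormalPDF a + ∫ x in Ioi a, stdNormalPDF x := by
  have hderiv (x : ℝ) : HasDerivAt (fun x ↦ -(x * stdNormalPDF x))
      (x ^ 2 * stdNormalPDF x - stdNormalPDF x) x :=
    ((hasDerivAt_id' x).mul (hasDerivAt_stdNormalPDF x)).neg.congr_deriv (by ring)
  have h := integral_Ioi_of_hasDerivAt_of_integrableOn (a := a) (fun x _ ↦ hderiv x)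
    ((integrable_pow_mul_stdNormalPDF 2).sub integrable_stdNormalPDF).integrableOn
    (by simpa using (integrable_pow_mul_stdNormalPDF 1).neg.integrableOn)
  rw [integral_sub (integrable_pow_mul_stdNormalPDF 2).integrableOn
    integrable_stdNormalPDF.integrableOn] at h
  linarith

theorem integral_Ioi_add_sq_mul_stdNormalPDF (a c : ℝ) :
    ∫ x in Ioi a, (x + c) ^ 2 * stdNormalPDF x
      = (1 + c ^ 2) * (∫ x in Ioi a, stdNormalPDF x) + (a + 2 * c) * stdNormalPDF a := by
  have hexpand : (fun x ↦ (x + c) ^ 2 * stdNormalPDF x) = fun x ↦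
      x ^ 2 * stdNormalPDF x + (2 * c * (x ^ 1 * stdNormalPDF x) + c ^ 2 * stdNormalPDF x) := by
    ext x; ring
  have h1 := (integrable_pow_mul_stdNormalPDF 1).const_mul (2 * c)
  have h0 := integrable_stdNormalPDF.const_mul (c ^ 2)
  have h10 : Integrable fun x ↦ 2 * c * (x ^ 1 * stdNormalPDF x) + c ^ 2 * stdNormalPDF x :=
    h1.add h0
  rw [hexpand, integral_add (integrable_pow_mul_stdNormalPDF 2).integrableOn
    h10.integrableOn, integral_add h1.integrableOn h0.integrableOn,
    integral_const_mul, integral_const_mul]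
  simp only [pow_one]
  rw [integral_Ioi_mul_stdNormalPDF, integral_Ioi_sq_mul_stdNormalPDF]
  ring

theorem integral_gaussianReal_eq_integral_stdNormalPDF {E : Type*} [NormedAddCommGroup E]
    [NormedSpace ℝ E] {v : ℝ≥0} (hv : v ≠ 0) (f : ℝ → E) :
    ∫ x, f x ∂gaussianReal 0 v = ∫ x, stdNormalPDF x • f (√(v : ℝ) * x) := by
  have hmap : (gaussianReal 0 1).map (√(v : ℝ) * ·) = gaussianReal 0 v := by
    rw [gaussianReal_map_const_mul, mul_zero, mul_one]
    congr
    exact sq_sqrt v.coe_nonneg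
  rw [← hmap, (measurableEmbedding_mulLeft₀ (by positivity)).integral_map,
    integral_gaussianReal_eq_integral_smul one_ne_zero, stdNormalPDF_eq_gaussianPDFReal]

namespace BlackScholes

/-- The paper's `X_T^0` as a function of `W_T = w`. -/
noncomputable def logPrice (s0 σ0 T r w : ℝ) : ℝ :=
  log s0 + (r - σ0 ^ 2 / 2) * T + σ0 * w

noncomputable def dPlus (s0 K σ0 T r : ℝ) : ℝ :=
  (log (s0 / K) + (r + σ0 ^ 2 / 2) * T) / (σ0 * √T)

variable {s0 K σ0 T r : ℝ}

theorem logPrice_sqrt_mul_add (hT : 0 ≤ T) (v : ℝ) :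
    logPrice s0 σ0 T r (√T * (v + σ0 * √T))
      = log s0 + r * T + (σ0 * √T * v + (σ0 * √T) ^ 2 / 2) := by
  rw [logPrice]
  linear_combination (σ0 ^ 2 / 2) * sq_sqrt hT

theorem log_lt_logPrice_iff (hs0 : 0 < s0) (hK : 0 < K) (hσ0 : 0 < σ0) (hT : 0 < T) (v : ℝ) :
    log K < logPrice s0 σ0 T r (√T * (v + σ0 * √T)) ↔ -dPlus s0 K σ0 T r < v := by
  rw [logPrice_sqrt_mul_add hT.le, dPlus, neg_lt, lt_div_iff₀ (by positivity),
    log_div hs0.ne' hK.ne', mul_pow, sq_sqrt hT.le]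
  constructor <;> intro h <;> linarith

theorem stdNormalPDF_mul_sq_mul_indicator_exp_logPrice (hs0 : 0 < s0) (hK : 0 < K)
    (hσ0 : 0 < σ0) (hT : 0 < T) (v : ℝ) :
    stdNormalPDF (v + σ0 * √T) * ((√T * (v + σ0 * √T)) ^ 2
        * (Ioi (log K)).indicator exp (logPrice s0 σ0 T r (√T * (v + σ0 * √T))))
      = s0 * exp (r * T) * T
        * (Ioi (-dPlus s0 K σ0 T r)).indicator (fun v ↦ (v + σ0 * √T) ^ 2 * stdNormalPDF v) v := by
  by_cases hv : -dPlus s0 K σ0 T r < v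
  · have hX : logPrice s0 σ0 T r (√T * (v + σ0 * √T)) ∈ Ioi (log K) :=
      (log_lt_logPrice_iff hs0 hK hσ0 hT v).2 hv
    rw [indicator_of_mem hX, indicator_of_mem (mem_Ioi.2 hv), logPrice_sqrt_mul_add hT.le,
      exp_add, exp_add, exp_log hs0, ← stdNormalPDF_add_mul_exp v (σ0 * √T), mul_pow,
      sq_sqrt hT.le]
    ring
  · have hX : logPrice s0 σ0 T r (√T * (v + σ0 * √T)) ∉ Ioi (log K) :=
      fun h ↦ hv ((log_lt_logPrice_iff hs0 hK hσ0 hT v).1 h)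
    rw [indicator_of_notMem hX, indicator_of_notMem (fun h ↦ hv (mem_Ioi.1 h))]
    ring

theorem integral_sq_mul_indicator_exp_logPrice_gaussianReal (hs0 : 0 < s0) (hK : 0 < K)
    (hσ0 : 0 < σ0) (hT : 0 < T) :
    ∫ w, w ^ 2 * (Ioi (log K)).indicator exp (logPrice s0 σ0 T r w) ∂gaussianReal 0 T.toNNReal
      = s0 * exp (r * T) * T * ((1 + σ0 ^ 2 * T) * stdNormalCDF (dPlus s0 K σ0 T r)
        + (2 * σ0 * √T - dPlus s0 K σ0 T r) * stdNormalPDF (dPlus s0 K σ0 T r)) := by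
  rw [integral_gaussianReal_eq_integral_stdNormalPDF (by simpa using hT),
    Real.coe_toNNReal _ hT.le, ← integral_add_right_eq_self _ (σ0 * √T)]
  simp only [smul_eq_mul, stdNormalPDF_mul_sq_mul_indicator_exp_logPrice hs0 hK hσ0 hT]
  rw [integral_const_mul, integral_indicator measurableSet_Ioi,
    integral_Ioi_add_sq_mul_stdNormalPDF, integral_Ioi_neg_stdNormalPDF, stdNormalPDF_neg,
    mul_pow, sq_sqrt hT.le]
  ring

end BlackScholes

open BlackScholes in
theorem expectation_Wsq_indicator_exp_gaussian_general
    {Ω : Type*} [MeasurableSpace Ω] (P : Measure Ω)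
    (s0 K σ0 T r : ℝ) (hs0 : 0 < s0) (hK : 0 < K) (hσ0 : 0 < σ0) (hT : 0 < T)
    (W : Ω → ℝ) (hWmeas : Measurable W)
    (hW : Measure.map W P = gaussianReal 0 (Real.toNNReal T)) :
    ∫ ω, (W ω) ^ 2 * Set.indicator (Set.Ioi (Real.log K)) (fun x => Real.exp x)
        (Real.log s0 + (r - σ0 ^ 2 / 2) * T + σ0 * W ω) ∂P =
      s0 * Real.exp (r * T) * T *
        ((1 + σ0 ^ 2 * T) *
            stdNormalCDF ((Real.log (s0 / K) + (r + σ0 ^ 2 / 2) * T) / (σ0 * Real.sqrt T))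
          + (2 * σ0 * Real.sqrt T
              - (Real.log (s0 / K) + (r + σ0 ^ 2 / 2) * T) / (σ0 * Real.sqrt T)) *
            stdNormalPDF ((Real.log (s0 / K) + (r + σ0 ^ 2 / 2) * T) / (σ0 * Real.sqrt T))) := by
  have hmeas : Measurable fun w ↦ w ^ 2 * (Ioi (log K)).indicator exp (logPrice s0 σ0 T r w) :=
    (measurable_id.pow_const 2).mul
      ((measurable_exp.indicator measurableSet_Ioi).comp (by unfold logPrice; fun_prop))
  have h := integral_sq_mul_indicator_exp_logPrice_gaussianReal (r := r) hs0 hK hσ0 hT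
  rw [← hW, integral_map hWmeas.aemeasurable hmeas.aestronglyMeasurable] at h
  exact h

/-- If `W` has law `N(0, T)` and `X = log s0 + (r − σ0²/2)T + σ0 W`, then
`E[W² 1_{X > log K} e^X] = s0 e^{rT} T ((1 + σ0²T) Φ(d₊) + (2σ0√T − d₊) φ(d₊))`. -/
theorem expectation_Wsq_indicator_exp_gaussian
    {Ω : Type*} [MeasurableSpace Ω] (P : Measure Ω) [IsProbabilityMeasure P]
    (s0 K σ0 T r : ℝ) (hs0 : 0 < s0) (hK : 0 < K) (hσ0 : 0 < σ0) (hT : 0 < T)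
    (W : Ω → ℝ) (hWmeas : Measurable W)
    (hW : Measure.map W P = gaussianReal 0 (Real.toNNReal T)) :
    ∫ ω, (W ω) ^ 2 * Set.indicator (Set.Ioi (Real.log K)) (fun x => Real.exp x)
        (Real.log s0 + (r - σ0 ^ 2 / 2) * T + σ0 * W ω) ∂P =
      s0 * Real.exp (r * T) * T *
        ((1 + σ0 ^ 2 * T) *
            stdNormalCDF ((Real.log (s0 / K) + (r + σ0 ^ 2 / 2) * T) / (σ0 * Real.sqrt T))
          + (2 * σ0 * Real.sqrt T
              - (Real.log (s0 / K) + (r + σ0 ^ 2 / 2) * T) / (σ0 * Real.sqrt T)) *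
            stdNormalPDF ((Real.log (s0 / K) + (r + σ0 ^ 2 / 2) * T) / (σ0 * Real.sqrt T))) :=
  expectation_Wsq_indicator_exp_gaussian_general P s0 K σ0 T r hs0 hK hσ0 hT W hWmeas hW
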